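/- Let ρ be a qubit density matrix with Bloch vector r ∈ ℝ³, r_i = Tr(ρ·σ_i). Then the second-order moment under Haar-random unitaries satisfies ∫_{U(2)} (Re Tr(ρ · U σ₃ U†))² dμ(U) = ‖r‖²/3, where μ is the Haar probability measure on the compact group U(2) of 2×2 complex unitary matrices. -/

import Mathlib

open Matrix Complex BigOperators MeasureTheory
open scoped ComplexOrder

/-- The three Pauli matrices σ₁, σ₂, σ₃ (indexed by `Fin 3`). -/
noncomputable def pauli : Fin 3 → Matrix (Fin 2) (Fin 2) ℂ
  | 0 => !![0, 1; 1, 0]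
  | 1 => !![0, -Complex.I; Complex.I, 0]
  | 2 => !![1, 0; 0, -1]

/-- Bloch vector component `r_i = Tr (ρ σ_i)`. -/
noncomputable def bloch (ρ : Matrix (Fin 2) (Fin 2) ℂ) (i : Fin 3) : ℝ :=
  ((ρ * pauli i).trace).re

/-- The Borel σ-algebra on the unitary group U(2). -/
noncomputable instance : MeasurableSpace (Matrix.unitaryGroup (Fin 2) ℂ) := borel _

instance : BorelSpace (Matrix.unitaryGroup (Fin 2) ℂ) := ⟨rfl⟩

/-!
The rotation of the Bloch sphere induced by `U` sends the z-axis to the unit vector `n(U)` with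
`U σ₃ U† = ∑ nᵢ(U) σᵢ`, so `Re Tr(ρ U σ₃ U†) = ⟨r, n(U)⟩`. By left invariance of Haar measure, the
second moments `∫ nᵢ nⱼ` are unchanged when `U` is replaced by `V U`. Taking `V = σᵢ` flips the
sign of `nⱼ` for `j ≠ i` and fixes `nᵢ`, so the mixed moments vanish; taking for `V` a unitary that
permutes the Pauli matrices cyclically shows that the three diagonal moments agree, and as
`|n(U)| = 1` they sum to `1`. Hence `∫ nᵢ nⱼ = δᵢⱼ / 3` and `∫ ⟨r, n⟩² = |r|² / 3`.
-/

lemma Matrix.UnitaryGroup.trace_conj {n α : Type*} [Fintype n] [DecidableEq n] [CommRing α]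
    [StarRing α] (U : unitaryGroup n α) (A : Matrix n n α) :
    ((U : Matrix n n α) * A * (U : Matrix n n α)ᴴ).trace = A.trace := by
  rw [trace_mul_cycle, ← star_eq_conjTranspose, UnitaryGroup.star_mul_self, Matrix.one_mul]

lemma Matrix.UnitaryGroup.det_conj {n α : Type*} [Fintype n] [DecidableEq n] [CommRing α]
    [StarRing α] (U : unitaryGroup n α) (A : Matrix n n α) :
    ((U : Matrix n n α) * A * (U : Matrix n n α)ᴴ).det = A.det := by
  rw [det_mul, det_mul, mul_right_comm, ← det_mul, ← star_eq_conjTranspose, U.2.2, det_one,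
    one_mul]

lemma integral_sq_sum_mul_eq {α ι : Type*} [MeasurableSpace α] {μ : Measure α} [Fintype ι]
    [DecidableEq ι] {f : ι → α → ℝ} (hf : ∀ i j, Integrable (fun x => f i x * f j x) μ) {c : ℝ}
    (hc : ∀ i j, ∫ x, f i x * f j x ∂μ = if i = j then c else 0) (r : ι → ℝ) :
    ∫ x, (∑ i, r i * f i x) ^ 2 ∂μ = c * ∑ i, r i ^ 2 := by
  have hexpand : ∀ x, (∑ i, r i * f i x) ^ 2 = ∑ i, ∑ j, r i * r j * (f i x * f j x) := by
    intro x
    simp only [sq, Finset.sum_mul_sum]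
    exact Finset.sum_congr rfl fun i _ => Finset.sum_congr rfl fun j _ => by ring
  simp_rw [hexpand]
  rw [integral_finsetSum _ fun i _ => integrable_finsetSum _ fun j _ => (hf i j).const_mul _]
  simp_rw [integral_finsetSum _ fun j _ => (hf _ j).const_mul _, integral_const_mul, hc]
  simp [Finset.mul_sum, sq, mul_comm]

lemma pauli_conjTranspose (i : Fin 3) : (pauli i)ᴴ = pauli i := by
  fin_cases i <;> ext a b <;> fin_cases a <;> fin_cases b <;> simp [pauli]

lemma pauli_isHermitian (i : Fin 3) : (pauli i).IsHermitian := pauli_conjTranspose i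

lemma pauli_mul_self (i : Fin 3) : pauli i * pauli i = 1 := by
  fin_cases i <;> ext a b <;> fin_cases a <;> fin_cases b <;> simp [pauli, one_apply]

lemma pauli_mul_pauli_mul_pauli_of_ne {i j : Fin 3} (h : i ≠ j) :
    pauli i * pauli j * pauli i = -pauli j := by
  fin_cases i <;> fin_cases j <;> simp at h <;>
    ext a b <;> fin_cases a <;> fin_cases b <;> simp [pauli]

lemma trace_pauli_two : (pauli 2).trace = 0 := by simp [pauli, trace_fin_two]

lemma det_pauli_two : (pauli 2).det = -1 := by simp [pauli, det_fin_two]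

lemma det_sum_smul_pauli (c : Fin 3 → ℝ) :
    (∑ i, (c i : ℂ) • pauli i).det = -∑ i, (c i : ℂ) ^ 2 := by
  simp [Fin.sum_univ_three, pauli, det_fin_two]
  ring_nf
  simp [Complex.I_sq]
  ring

/-- `(1 + i (σ₁ + σ₂ + σ₃)) / 2`, the rotation by `2π/3` about `(1, 1, 1)`. -/
noncomputable def pauliCycle : Matrix (Fin 2) (Fin 2) ℂ :=
  !![(1 + I) / 2, (1 + I) / 2; (-1 + I) / 2, (1 - I) / 2]

lemma pauliCycle_mem_unitaryGroup : pauliCycle ∈ unitaryGroup (Fin 2) ℂ := by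
  rw [mem_unitaryGroup_iff]
  ext a b
  fin_cases a <;> fin_cases b <;>
    simp [pauliCycle, mul_apply, Fin.sum_univ_two, one_apply, map_ofNat] <;>
    ring_nf <;> simp [Complex.I_sq] <;> ring_nf

lemma pauliCycle_conj_pauli (i : Fin 3) :
    pauliCycleᴴ * pauli i * pauliCycle = pauli (i + 1) := by
  fin_cases i <;> ext a b <;> fin_cases a <;> fin_cases b <;>
    simp [pauliCycle, pauli, mul_apply, Fin.sum_univ_two, map_ofNat] <;>
    ring_nf <;> simp [Complex.I_sq] <;> ring_nf

noncomputable def pauliUnitary (i : Fin 3) : unitaryGroup (Fin 2) ℂ :=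
  ⟨pauli i, by
    rw [mem_unitaryGroup_iff, star_eq_conjTranspose, pauli_conjTranspose, pauli_mul_self]⟩

noncomputable def pauliCycleUnitary : unitaryGroup (Fin 2) ℂ :=
  ⟨pauliCycle, pauliCycle_mem_unitaryGroup⟩

noncomputable def pauliCoeff (A : Matrix (Fin 2) (Fin 2) ℂ) (i : Fin 3) : ℝ :=
  ((pauli i * A).trace).re / 2

lemma sum_pauliCoeff_smul_pauli {H : Matrix (Fin 2) (Fin 2) ℂ} (hH : H.IsHermitian)
    (h0 : H.trace = 0) : ∑ i, (pauliCoeff H i : ℂ) • pauli i = H := by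
  have h10 : H 1 0 = star (H 0 1) := (hH.apply 1 0).symm
  have h00 : (H 0 0).im = 0 := Complex.conj_eq_iff_im.mp (hH.apply 0 0)
  have h11 : H 1 1 = -H 0 0 := by rw [trace_fin_two] at h0; linear_combination h0
  ext a b
  fin_cases a <;> fin_cases b <;>
    simp [Fin.sum_univ_three, pauliCoeff, pauli, trace_fin_two, mul_apply, Fin.sum_univ_two,
      h10, h11] <;>
    apply Complex.ext <;> simp [h00]

lemma re_trace_mul_eq_sum_bloch_mul_pauliCoeff (ρ : Matrix (Fin 2) (Fin 2) ℂ)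
    {H : Matrix (Fin 2) (Fin 2) ℂ} (hH : H.IsHermitian) (h0 : H.trace = 0) :
    (ρ * H).trace.re = ∑ i, bloch ρ i * pauliCoeff H i := by
  conv_lhs => rw [← sum_pauliCoeff_smul_pauli hH h0]
  simp [Matrix.mul_sum, trace_sum, bloch, mul_comm]

lemma sum_pauliCoeff_sq {H : Matrix (Fin 2) (Fin 2) ℂ} (hH : H.IsHermitian)
    (h0 : H.trace = 0) : ∑ i, pauliCoeff H i ^ 2 = -H.det.re := by
  conv_rhs => rw [← sum_pauliCoeff_smul_pauli hH h0, det_sum_smul_pauli]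
  norm_cast
  rw [neg_neg]

lemma pauliCoeff_mul_mul_conjTranspose (V A : Matrix (Fin 2) (Fin 2) ℂ) (i : Fin 3) :
    pauliCoeff (V * A * Vᴴ) i = ((Vᴴ * pauli i * V * A).trace).re / 2 := by
  rw [pauliCoeff, ← Matrix.mul_assoc, ← Matrix.mul_assoc, trace_mul_comm]
  simp only [Matrix.mul_assoc]

noncomputable def rotatedZAxis (U : unitaryGroup (Fin 2) ℂ) : Fin 3 → ℝ :=
  pauliCoeff ((U : Matrix (Fin 2) (Fin 2) ℂ) * pauli 2 * (U : Matrix (Fin 2) (Fin 2) ℂ)ᴴ)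

section rotatedZAxis

variable (U : unitaryGroup (Fin 2) ℂ)

lemma isHermitian_conj_pauli_two :
    ((U : Matrix (Fin 2) (Fin 2) ℂ) * pauli 2 * (U : Matrix (Fin 2) (Fin 2) ℂ)ᴴ).IsHermitian :=
  isHermitian_mul_mul_conjTranspose _ (pauli_isHermitian 2)

lemma trace_conj_pauli_two :
    ((U : Matrix (Fin 2) (Fin 2) ℂ) * pauli 2 * (U : Matrix (Fin 2) (Fin 2) ℂ)ᴴ).trace = 0 := by
  rw [UnitaryGroup.trace_conj, trace_pauli_two]

lemma re_trace_mul_conj_pauli_two (ρ : Matrix (Fin 2) (Fin 2) ℂ) :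
    ((ρ * ((U : Matrix (Fin 2) (Fin 2) ℂ) * pauli 2 *
      (U : Matrix (Fin 2) (Fin 2) ℂ)ᴴ)).trace).re = ∑ i, bloch ρ i * rotatedZAxis U i :=
  re_trace_mul_eq_sum_bloch_mul_pauliCoeff ρ (isHermitian_conj_pauli_two U)
    (trace_conj_pauli_two U)

lemma sum_rotatedZAxis_sq : ∑ i, rotatedZAxis U i ^ 2 = 1 := by
  rw [rotatedZAxis, sum_pauliCoeff_sq (isHermitian_conj_pauli_two U) (trace_conj_pauli_two U),
    UnitaryGroup.det_conj, det_pauli_two]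
  simp

lemma abs_rotatedZAxis_le_one (i : Fin 3) : |rotatedZAxis U i| ≤ 1 := by
  rw [← sq_le_one_iff_abs_le_one, ← sum_rotatedZAxis_sq U]
  exact Finset.single_le_sum (fun j _ => sq_nonneg (rotatedZAxis U j)) (Finset.mem_univ i)

lemma continuous_rotatedZAxis (i : Fin 3) :
    Continuous fun U : unitaryGroup (Fin 2) ℂ => rotatedZAxis U i := by
  unfold rotatedZAxis pauliCoeff
  fun_prop

lemma rotatedZAxis_mul_of_conj_pauli {V : unitaryGroup (Fin 2) ℂ} {i j : Fin 3} {c : ℝ}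
    (h : (V : Matrix (Fin 2) (Fin 2) ℂ)ᴴ * pauli i * V = (c : ℂ) • pauli j) :
    rotatedZAxis (V * U) i = c * rotatedZAxis U j := by
  have hVU : ((V * U : unitaryGroup (Fin 2) ℂ) : Matrix (Fin 2) (Fin 2) ℂ) * pauli 2 *
      ((V * U : unitaryGroup (Fin 2) ℂ) : Matrix (Fin 2) (Fin 2) ℂ)ᴴ =
      (V : Matrix (Fin 2) (Fin 2) ℂ) *
        ((U : Matrix (Fin 2) (Fin 2) ℂ) * pauli 2 * (U : Matrix (Fin 2) (Fin 2) ℂ)ᴴ) *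
        (V : Matrix (Fin 2) (Fin 2) ℂ)ᴴ := by
    simp only [UnitaryGroup.mul_val, conjTranspose_mul, Matrix.mul_assoc]
  rw [rotatedZAxis, hVU, pauliCoeff_mul_mul_conjTranspose, h]
  simp [rotatedZAxis, pauliCoeff, Matrix.mul_assoc]
  ring

lemma rotatedZAxis_pauliUnitary_mul_self (i : Fin 3) :
    rotatedZAxis (pauliUnitary i * U) i = rotatedZAxis U i := by
  simpa using rotatedZAxis_mul_of_conj_pauli U (c := 1) (V := pauliUnitary i) (j := i)
    (by simp [pauliUnitary, pauli_conjTranspose, pauli_mul_self])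

lemma rotatedZAxis_pauliUnitary_mul_of_ne {i j : Fin 3} (h : i ≠ j) :
    rotatedZAxis (pauliUnitary i * U) j = -rotatedZAxis U j := by
  simpa using rotatedZAxis_mul_of_conj_pauli U (c := -1) (V := pauliUnitary i) (j := j)
    (by simp [pauliUnitary, pauli_conjTranspose, pauli_mul_pauli_mul_pauli_of_ne h])

lemma rotatedZAxis_pauliCycleUnitary_mul (i : Fin 3) :
    rotatedZAxis (pauliCycleUnitary * U) i = rotatedZAxis U (i + 1) := by
  simpa using rotatedZAxis_mul_of_conj_pauli U (c := 1) (V := pauliCycleUnitary) (j := i + 1)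
    (by simp [pauliCycleUnitary, pauliCycle_conj_pauli])

end rotatedZAxis

section Haar

variable (μ : Measure (unitaryGroup (Fin 2) ℂ))

lemma integrable_rotatedZAxis_mul [IsFiniteMeasure μ] (i j : Fin 3) :
    Integrable (fun U => rotatedZAxis U i * rotatedZAxis U j) μ := by
  refine .of_bound
    ((continuous_rotatedZAxis i).mul (continuous_rotatedZAxis j)).aestronglyMeasurable 1
    (.of_forall fun U => ?_)
  rw [Real.norm_eq_abs, abs_mul]
  exact mul_le_one₀ (abs_rotatedZAxis_le_one U i) (abs_nonneg _) (abs_rotatedZAxis_le_one U j)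

lemma integral_rotatedZAxis_mul_of_ne [μ.IsMulLeftInvariant] {i j : Fin 3} (h : i ≠ j) :
    ∫ U, rotatedZAxis U i * rotatedZAxis U j ∂μ = 0 :=
  integral_eq_zero_of_mul_left_eq_neg (g := pauliUnitary i) fun U => by
    rw [rotatedZAxis_pauliUnitary_mul_self, rotatedZAxis_pauliUnitary_mul_of_ne U h, mul_neg]

variable [μ.IsMulLeftInvariant] [IsProbabilityMeasure μ]

lemma integral_rotatedZAxis_sq (i : Fin 3) : ∫ U, rotatedZAxis U i ^ 2 ∂μ = 1 / 3 := by
  have hshift (j : Fin 3) :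
      ∫ U, rotatedZAxis U (j + 1) ^ 2 ∂μ = ∫ U, rotatedZAxis U j ^ 2 ∂μ := by
    simp_rw [← rotatedZAxis_pauliCycleUnitary_mul]
    exact integral_mul_left_eq_self (fun U => rotatedZAxis U j ^ 2) pauliCycleUnitary
  have hall (j : Fin 3) : ∫ U, rotatedZAxis U j ^ 2 ∂μ = ∫ U, rotatedZAxis U 0 ^ 2 ∂μ := by
    fin_cases j
    · rfl
    · exact hshift 0
    · exact (hshift 1).trans (hshift 0)
  have hsum : ∑ j : Fin 3, ∫ U, rotatedZAxis U j ^ 2 ∂μ = 1 := by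
    rw [← integral_finsetSum _ fun j _ => by simpa [sq] using integrable_rotatedZAxis_mul μ j j]
    simp [sum_rotatedZAxis_sq]
  rw [Fin.sum_univ_three, hall 1, hall 2] at hsum
  rw [hall i]
  linarith

lemma integral_rotatedZAxis_mul (i j : Fin 3) :
    ∫ U, rotatedZAxis U i * rotatedZAxis U j ∂μ = if i = j then 1 / 3 else 0 := by
  split_ifs with h
  · rw [h, ← integral_rotatedZAxis_sq μ j]
    simp [sq]
  · exact integral_rotatedZAxis_mul_of_ne μ h

end Haar

theorem second_moment_haar_general (ρ : Matrix (Fin 2) (Fin 2) ℂ)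
    (μ : Measure (Matrix.unitaryGroup (Fin 2) ℂ))
    [μ.IsHaarMeasure] [IsProbabilityMeasure μ] :
    ∫ U : Matrix.unitaryGroup (Fin 2) ℂ,
        ((ρ * ((U : Matrix (Fin 2) (Fin 2) ℂ) * pauli 2 *
          (U : Matrix (Fin 2) (Fin 2) ℂ)ᴴ)).trace).re ^ 2 ∂μ
      = (∑ i, (bloch ρ i) ^ 2) / 3 := by
  simp_rw [re_trace_mul_conj_pauli_two]
  rw [integral_sq_sum_mul_eq (integrable_rotatedZAxis_mul μ) (integral_rotatedZAxis_mul μ)]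
  ring

/-- For a qubit density matrix ρ with Bloch vector r, the second-order
moment under Haar-random unitaries satisfies
`∫_{U(2)} (Re Tr(ρ · U σ₃ U†))² dμ(U) = ‖r‖²/3`,
where μ is the Haar probability measure on the compact group U(2). -/
theorem second_moment_haar (ρ : Matrix (Fin 2) (Fin 2) ℂ)
    (hpos : ρ.PosSemidef) (htr : ρ.trace = 1)
    (μ : Measure (Matrix.unitaryGroup (Fin 2) ℂ))
    [μ.IsHaarMeasure] [IsProbabilityMeasure μ] :
    ∫ U : Matrix.unitaryGroup (Fin 2) ℂ,
        ((ρ * ((U : Matrix (Fin 2) (Fin 2) ℂ) * pauli 2 *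
          (U : Matrix (Fin 2) (Fin 2) ℂ)ᴴ)).trace).re ^ 2 ∂μ
      = (∑ i, (bloch ρ i) ^ 2) / 3 :=
  second_moment_haar_general ρ μ
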